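/- arXiv:2312.13757 — 3 statements merged into one kernel-verified Lean document; each statement's English description precedes it below -/
import Mathlib

section
/- In the structure M of pairs (p,q) with p ∈ ℚ_{≥0}, q ∈ ℤ, q ∈ ℕ when p = 0, ordered lexicographically, for every n ≥ 2 and every element x ∈ M there exists r ∈ {0, 1, ..., n-1} and u ∈ M with x = n·u + r (where n·u denotes u added to itself n times); i.e., M satisfies the division-with-remainder schema of Presburger arithmetic. -/
/-- The nonstandard model: pairs `(p, q)` with `p : ℚ`, `p ≥ 0`, `q : ℤ`,
and `q ≥ 0` (i.e. `q ∈ ℕ`) whenever `p = 0`. -/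
def M : Type := {x : ℚ × ℤ // 0 ≤ x.1 ∧ (x.1 = 0 → 0 ≤ x.2)}

/-- Componentwise addition on `M`. -/
instance : Add M :=
  ⟨fun x y => ⟨(x.1.1 + y.1.1, x.1.2 + y.1.2),
    add_nonneg x.2.1 y.2.1,
    fun h => by
      have h1 : x.1.1 = 0 ∧ y.1.1 = 0 :=
        (add_eq_zero_iff_of_nonneg x.2.1 y.2.1).mp h
      exact add_nonneg (x.2.2 h1.1) (y.2.2 h1.2)⟩⟩

instance : Zero M := ⟨⟨(0, 0), by norm_num⟩⟩

/-- The embedding of `ℕ` into `M`, `n ↦ (0, n)`. -/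
def natM (n : ℕ) : M := ⟨((0 : ℚ), (n : ℤ)), le_refl 0, fun _ => Int.natCast_nonneg n⟩

/-- `n`-fold repeated addition: `smulM n x = x + ⋯ + x` (`n` times). -/
def smulM (n : ℕ) (x : M) : M := Nat.rec 0 (fun _ ih => ih + x) n

/-- Lexicographic order on `M`. -/
instance : LT M := ⟨fun x y => x.1.1 < y.1.1 ∨ (x.1.1 = y.1.1 ∧ x.1.2 < y.1.2)⟩

/-! Divide the rational coordinate exactly and the integer coordinate with remainder in `ℤ`.
The quotient stays in `M` because Euclidean division by a positive integer keeps a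
nonnegative integer nonnegative. -/

lemma val_smulM (n : ℕ) (x : M) : (smulM n x).1 = n • x.1 := by
  induction n with
  | zero => exact (zero_nsmul x.1).symm
  | succ k ih => exact (congrArg (· + x.1) ih).trans (succ_nsmul x.1 k).symm

def divM (n : ℕ) (x : M) : M :=
  ⟨(x.1.1 / n, x.1.2 / n), div_nonneg x.2.1 n.cast_nonneg, fun h => by
    rcases div_eq_zero_iff.mp h with hp | hn
    · exact Int.ediv_nonneg (x.2.2 hp) n.cast_nonneg
    · simp [show n = 0 by exact_mod_cast hn]⟩

lemma smulM_divM_add_natM {n : ℕ} (hn : 0 < n) (x : M) :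
    smulM n (divM n x) + natM (x.1.2 % n).toNat = x := by
  have hq : 0 ≤ x.1.2 % n := Int.emod_nonneg _ (by exact_mod_cast hn.ne')
  apply Subtype.ext
  change (smulM n (divM n x)).1 + (0, ((x.1.2 % n).toNat : ℤ)) = x.1
  rw [val_smulM, Int.toNat_of_nonneg hq]
  ext
  · simp [divM, mul_div_cancel₀ _ (Nat.cast_ne_zero.mpr hn.ne' : (n : ℚ) ≠ 0)]
  · simp [divM, Int.mul_ediv_add_emod]

lemma toNat_emod_lt {n : ℕ} (hn : 0 < n) (q : ℤ) : (q % n).toNat < n := by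
  have : q % n < n := Int.emod_lt_of_pos q (by exact_mod_cast hn)
  omega

/-- Division with remainder in `M`: for every `n ≥ 2` and `x ∈ M` there are
`u ∈ M` and `r < n` with `x = n·u + r`. -/
theorem M_div_with_remainder (n : ℕ) (hn : 2 ≤ n) (x : M) :
    ∃ (u : M) (r : ℕ), r < n ∧ x = smulM n u + natM r := by
  have hpos : 0 < n := by omega
  exact ⟨divM n x, (x.1.2 % n).toNat, toNat_emod_lt hpos _, (smulM_divM_add_natM hpos x).symm⟩
end

section
/- There is no function V : M → M on the nonstandard model M = {(p,q) : p ∈ ℚ_{≥0}, q ∈ ℤ, q ∈ ℕ if p = 0} (with componentwise addition) such that V satisfies: (a) V(x) = x holds for some x with nonzero first component, and (b) every x with V(x) = x and x ≠ 0 is not divisible by 3 in M, and (c) every x with V(x) = x and x ≠ 0 is divisible by 2 in M arbitrarily often (i.e., for every k there is y with 2^k · y = x). -/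
/-! Divisibility by every power of 2 forces the `ℤ`-component of a fixed point to vanish, and
every element `(p, 0)` of `M` is divisible by every `n ≠ 0`, with quotient `(p / n, 0)`; so a
nonzero fixed point would be divisible by 3. -/

lemma smulM_val (n : ℕ) (x : M) :
    (smulM n x).1 = ((n : ℚ) * x.1.1, (n : ℤ) * x.1.2) := by
  induction n with
  | zero => simp [smulM]; rfl
  | succ k ih =>
    change ((smulM k x).1.1 + x.1.1, (smulM k x).1.2 + x.1.2) = _
    rw [ih]
    push_cast
    ext <;> ring

lemma dvd_snd_of_smulM_eq {n : ℕ} {x y : M} (h : smulM n y = x) : (n : ℤ) ∣ x.1.2 :=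
  ⟨y.1.2, by rw [← h, smulM_val]⟩

lemma exists_smulM_eq_of_snd_eq_zero {n : ℕ} (hn : n ≠ 0) {x : M} (hx : x.1.2 = 0) :
    ∃ y : M, smulM n y = x := by
  refine ⟨⟨(x.1.1 / n, 0), div_nonneg x.2.1 n.cast_nonneg, fun _ => le_rfl⟩,
    Subtype.ext ((smulM_val n _).trans ?_)⟩
  ext
  · exact mul_div_cancel₀ _ (Nat.cast_ne_zero.mpr hn)
  · simp [hx]

lemma Int.eq_zero_of_forall_two_pow_dvd {a : ℤ} (h : ∀ k : ℕ, (2 : ℤ) ^ k ∣ a) : a = 0 :=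
  Int.eq_zero_of_dvd_of_natAbs_lt_natAbs (h a.natAbs) (by simpa using Nat.lt_two_pow_self)

/-- There is no function `V : M → M` making `M` a model of the `V₂`-theorems
of Büchi arithmetic: (a) some `x` in a nonstandard galaxy satisfies `V x = x`;
(b) no nonzero fixed point of `V` is divisible by `3`; (c) every nonzero fixed
point of `V` is divisible by every power of `2`. -/
theorem no_V2_on_M :
    ¬ ∃ V : M → M,
      (∃ x : M, V x = x ∧ x.1.1 ≠ 0) ∧
      (∀ x : M, V x = x → x ≠ 0 → ¬ ∃ y : M, smulM 3 y = x) ∧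
      (∀ x : M, V x = x → x ≠ 0 → ∀ k : ℕ, ∃ y : M, smulM (2 ^ k) y = x) := by
  rintro ⟨V, ⟨x, hVx, hx_fst⟩, h_not_three_dvd, h_two_pow_dvd⟩
  have hx : x ≠ 0 := by
    rintro rfl
    exact hx_fst rfl
  have hx_snd : x.1.2 = 0 := Int.eq_zero_of_forall_two_pow_dvd fun k => by
    obtain ⟨y, hy⟩ := h_two_pow_dvd x hVx hx k
    exact_mod_cast dvd_snd_of_smulM_eq hy
  exact h_not_three_dvd x hVx hx (exists_smulM_eq_of_snd_eq_zero three_ne_zero hx_snd)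
end

section
/- For every element (p, q) of M with p > 0 and q ≠ 0, there are only finitely many k ∈ ℕ such that 2^k divides (p, q) in M; equivalently, (p,q) is divisible by 2^k in M iff 2^k divides q in ℤ. -/
/-!
Repeated addition in `M` is componentwise multiplication, so `(p, q)` with `p > 0` is an `n`-fold
sum exactly when `n ∣ q`: the witness `(p / n, q / n)` lies in `M` because its rational part is
positive, which lifts the sign condition on its integer part. A nonzero integer is divisible by
only finitely many powers of `2`.
-/

lemma M.ext {x y : M} (h : x.1 = y.1) : x = y := Subtype.ext h

lemma smulM_val_s12 (n : ℕ) (y : M) : (smulM n y).1 = n • y.1 := by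
  induction n with
  | zero => exact (zero_nsmul y.1).symm
  | succ n ih =>
    change (smulM n y).1 + y.1 = _
    rw [ih, succ_nsmul]

theorem exists_smulM_eq_iff {n : ℕ} (hn : n ≠ 0) {x : M} (hp : 0 < x.1.1) :
    (∃ y : M, smulM n y = x) ↔ (n : ℤ) ∣ x.1.2 := by
  constructor
  · rintro ⟨y, rfl⟩
    rw [smulM_val_s12, Prod.smul_snd, nsmul_eq_mul]
    exact dvd_mul_right _ _
  · rintro ⟨c, hc⟩
    have hpn : 0 < x.1.1 / n := by positivity
    refine ⟨⟨(x.1.1 / n, c), hpn.le, fun h => absurd h hpn.ne'⟩, M.ext ?_⟩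
    refine (smulM_val_s12 n _).trans (Prod.ext ?_ ?_)
    · exact (nsmul_eq_mul n _).trans (mul_div_cancel₀ _ (Nat.cast_ne_zero.mpr hn))
    · exact (nsmul_eq_mul n c).trans hc.symm

theorem M_pow_two_dvd (x : M) (hp : 0 < x.1.1) (hq : x.1.2 ≠ 0) :
    (∀ k : ℕ, (∃ y : M, smulM (2 ^ k) y = x) ↔ ((2 : ℤ) ^ k ∣ x.1.2)) ∧
    {k : ℕ | ∃ y : M, smulM (2 ^ k) y = x}.Finite := by
  have hdvd (k : ℕ) : (∃ y : M, smulM (2 ^ k) y = x) ↔ (2 : ℤ) ^ k ∣ x.1.2 := by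
    simpa using exists_smulM_eq_iff (pow_ne_zero k two_ne_zero) hp
  refine ⟨hdvd, ?_⟩
  have hfin : FiniteMultiplicity (2 : ℤ) x.1.2 := Int.finiteMultiplicity_iff.mpr ⟨by decide, hq⟩
  refine (Set.finite_Iic (multiplicity (2 : ℤ) x.1.2)).subset fun k hk => ?_
  exact hfin.pow_dvd_iff_le_multiplicity.mp ((hdvd k).mp hk)
end
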